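/- Fix a permutation σ. Then the proportion of permutations τ of length n such that the interval [σ,τ] in the consecutive pattern poset contains a non-trivial disconnected subinterval tends to 1 as n → ∞; that is, lim_{n→∞} #{τ ∈ S_n : [σ,τ] contains a non-trivial disconnected subinterval} / n! = 1. -/

import Mathlib

open scoped Classical

noncomputable section

/-- A permutation of length `n`, written in one-line notation as `τ 0, τ 1, …, τ (n-1)`. -/
abbrev Perm' (n : ℕ) := Equiv.Perm (Fin n)

/-- `σ` occurs in `τ` as a consecutive pattern at (0-indexed) starting position `i`:
the window `τ i, …, τ (i+m-1)` of adjacent entries is in the same relative order as `σ`. -/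
def OccursAt {m n : ℕ} (σ : Perm' m) (τ : Perm' n) (i : ℕ) : Prop :=
  ∃ h : i + m ≤ n, ∀ a b : Fin m,
    σ a < σ b ↔
      τ ⟨i + a, by have := a.isLt; omega⟩ < τ ⟨i + b, by have := b.isLt; omega⟩

/-- Consecutive pattern containment `σ ≤ τ`. -/
def PattLE {m n : ℕ} (σ : Perm' m) (τ : Perm' n) : Prop :=
  ∃ i, OccursAt σ τ i

/-- Permutations of arbitrary length: the carrier of the consecutive pattern poset. -/
abbrev PermS : Type := Σ n : ℕ, Perm' n

/-- The order of the consecutive pattern poset. -/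
def pLE (p q : PermS) : Prop := PattLE p.2 q.2

/-- The strict order of the consecutive pattern poset. -/
def pLT (p q : PermS) : Prop := pLE p q ∧ p ≠ q

/-- The covering relation of the consecutive pattern poset. -/
def pCovBy (p q : PermS) : Prop :=
  pLT p q ∧ ∀ r : PermS, pLT p r → pLT r q → False

/-- The open interval `(p,q)` in the consecutive pattern poset. -/
def openInterval (p q : PermS) : Set PermS := {r | pLT p r ∧ pLT r q}

/-- The Hasse diagram of the open interval `(p,q)`: vertices are the permutations strictly
between `p` and `q`, edges are the covering relations of the consecutive pattern poset. -/
def hasse (p q : PermS) : SimpleGraph (openInterval p q) :=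
  SimpleGraph.fromRel fun a b => pCovBy a.1 b.1

/-- The interval `[p,q]` is disconnected if the Hasse diagram of `(p,q)` is not connected. -/
def IntervalDisconnected (p q : PermS) : Prop := ¬ (hasse p q).Connected

/-- `window τ i m` is the reduction of the window of `τ` of length `m` starting at
(0-indexed) position `i`, i.e. the pattern `τ[i+1, i+m]` in 1-indexed notation. -/
def window {n : ℕ} (τ : Perm' n) (i m : ℕ) : Perm' m :=
  if h : i + m ≤ n then
    (Tuple.sort fun a : Fin m => τ ⟨i + a, by have := a.isLt; omega⟩)⁻¹
  else 1

/-- `τ` is monotone, i.e. equal to `12…n` or `n…21`. -/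
def IsMonotone {n : ℕ} (τ : Perm' n) : Prop :=
  (∀ a b : Fin n, a ≤ b → τ a ≤ τ b) ∨ (∀ a b : Fin n, a ≤ b → τ b ≤ τ a)

/-- `τ` has a bifix (a common proper prefix and proper suffix) of length `k`. -/
def HasBifixLen {n : ℕ} (τ : Perm' n) (k : ℕ) : Prop :=
  0 < k ∧ k < n ∧ window τ 0 k = window τ (n - k) k

/-- The length `|x(τ)|` of the exterior of `τ`, the longest bifix of `τ`. -/
def extLen {n : ℕ} (τ : Perm' n) : ℕ := Nat.findGreatest (HasBifixLen τ) n

/-- The exterior `x(τ)` of `τ`: its longest bifix. -/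
def extPerm {n : ℕ} (τ : Perm' n) : Perm' (extLen τ) := window τ 0 (extLen τ)

/-- The interior `i(τ) = τ[2,n-1]` of `τ`. -/
def intPerm {n : ℕ} (τ : Perm' n) : Perm' (n - 2) := window τ 1 (n - 2)

/-- `p` straddles `q`: `p < q`, `p` is both a prefix and a suffix of `q`,
and `p` has no other occurrence in `q`. -/
def Straddles (p q : PermS) : Prop :=
  pLT p q ∧ OccursAt p.2 q.2 0 ∧ OccursAt p.2 q.2 (q.1 - p.1) ∧
    ∀ i, OccursAt p.2 q.2 i → i = 0 ∨ i = q.1 - p.1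

/-- The interval `[p,q]` contains a non-trivial disconnected subinterval, i.e. a
subinterval `[a,b]` of rank at least 3 which is disconnected. -/
def HasNontrivDisconSub (p q : PermS) : Prop :=
  ∃ a b : PermS, pLE p a ∧ pLE a b ∧ pLE b q ∧ a.1 + 3 ≤ b.1 ∧ IntervalDisconnected a b

/-- The finite set of all permutations of length at most `N`. -/
def permsUpTo (N : ℕ) : Finset PermS :=
  (Finset.range (N + 1)).sigma fun n => (Finset.univ : Finset (Perm' n))

/-- The closed interval `[p,q]` of the consecutive pattern poset, as a finite set. -/
def intervalF (p q : PermS) : Finset PermS :=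
  (permsUpTo q.1).filter fun r => pLE p r ∧ pLE r q

/-- The number of elements of the interval `[σ,τ]` of rank `r`, i.e. of length `|σ| + r`. -/
def rankCard {m n : ℕ} (σ : Perm' m) (τ : Perm' n) (r : ℕ) : ℕ :=
  ((permsUpTo n).filter fun p => pLE ⟨m, σ⟩ p ∧ pLE p ⟨n, τ⟩ ∧ p.1 = m + r).card

/-- The direct sum `σ ⊕ π` of two permutations. -/
def dsum {m k : ℕ} (σ : Perm' m) (π : Perm' k) : Perm' (m + k) :=
  finSumFinEquiv.permCongr (σ.sumCongr π)



/-!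
If `p` straddles `q`, every `π` strictly between them contains `p` exactly once, since two
occurrences would give two occurrences of `p` in `q` less than `|q| - |p|` apart. Whether this
occurrence is at the start of `π` is then preserved along `π ≤ ρ`, and the windows
`q[1, |p|+1]` and `q[|q|-|p|, |q|]` differ in it, so the open interval `(p,q)` is disconnected.

The permutation `a = 12 ⊕ σ` begins with its minimum, hence straddles the skew sum `b = a ⊖ a`;
moreover `σ ≤ a` and `|b| - |a| = |σ| + 2 ≥ 3`, so every `τ ≥ b` has the subinterval `[a,b]`.
Cutting `τ ∈ S_n` into `⌊n/L⌋` disjoint blocks of length `L = |b|`, the free action of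
`S_L^⌊n/L⌋` permuting entries inside the blocks shows that the block patterns are independent
and uniform, so at most a fraction `(1 - 1/L!)^⌊n/L⌋ → 0` of all `τ` avoid `b`.
-/

open Finset

theorem perm_eq_of_lt_iff {n : ℕ} {p q : Perm' n} (h : ∀ a b, p a < p b ↔ q a < q b) :
    p = q := by
  have hmono : StrictMono (q ∘ p.symm) := fun x y hxy => by
    simpa using (h (p.symm x) (p.symm y)).1 (by simpa using hxy)
  exact Equiv.ext fun a => by simpa using (congrFun hmono.eq_id (p a)).symm

theorem window_lt_window_iff {n : ℕ} (τ : Perm' n) {i m : ℕ} (h : i + m ≤ n) (a b : Fin m) :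
    window τ i m a < window τ i m b ↔
      τ ⟨i + a, by have := a.isLt; omega⟩ < τ ⟨i + b, by have := b.isLt; omega⟩ := by
  set f : Fin m → Fin n := fun a => τ ⟨i + a, by have := a.isLt; omega⟩
  have hf : Function.Injective f := fun a b hab => by
    simpa [Fin.ext_iff] using τ.injective hab
  have hsort : StrictMono (f ∘ Tuple.sort f) :=
    (Tuple.monotone_sort f).strictMono_of_injective (hf.comp (Equiv.injective _))
  have hf_eq (c : Fin m) : f c = (f ∘ Tuple.sort f) ((Tuple.sort f)⁻¹ c) := by
    simp [Equiv.Perm.inv_def]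
  rw [window, dif_pos h]
  exact (show f a < f b ↔ _ by rw [hf_eq a, hf_eq b, hsort.lt_iff_lt]).symm

theorem occursAt_window {n : ℕ} (τ : Perm' n) {i m : ℕ} (h : i + m ≤ n) :
    OccursAt (window τ i m) τ i :=
  ⟨h, window_lt_window_iff τ h⟩

theorem OccursAt.window_eq {m n : ℕ} {p : Perm' m} {τ : Perm' n} {i : ℕ}
    (h : OccursAt p τ i) : window τ i m = p :=
  perm_eq_of_lt_iff fun a b => by rw [window_lt_window_iff τ h.1, h.2]

theorem occursAt_iff_window_eq {m n : ℕ} {p : Perm' m} {τ : Perm' n} {i : ℕ} :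
    OccursAt p τ i ↔ i + m ≤ n ∧ window τ i m = p :=
  ⟨fun h => ⟨h.1, h.window_eq⟩, fun ⟨h, hw⟩ => hw ▸ occursAt_window τ h⟩

theorem window_mul_of_apply {n L i : ℕ} (τ B : Perm' n) (r : Perm' L) (h : i + L ≤ n)
    (hB : ∀ t : Fin L,
      B ⟨i + t, by have := t.isLt; omega⟩ = ⟨i + r t, by have := (r t).isLt; omega⟩) :
    window (τ * B) i L = window τ i L * r :=
  perm_eq_of_lt_iff fun a b => by
    simp only [window_lt_window_iff _ h, Equiv.Perm.mul_apply, hB]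

theorem OccursAt.trans {k m n : ℕ} {p : Perm' k} {q : Perm' m} {r : Perm' n} {i j : ℕ}
    (hpq : OccursAt p q i) (hqr : OccursAt q r j) : OccursAt p r (j + i) := by
  refine ⟨by have := hpq.1; have := hqr.1; omega, fun a b => ?_⟩
  rw [hpq.2, hqr.2]
  simp only [Nat.add_assoc]

theorem OccursAt.of_add_of_occursAt {k m n : ℕ} {p : Perm' k} {q : Perm' m} {r : Perm' n}
    {i j : ℕ} (hpr : OccursAt p r (i + j)) (hqr : OccursAt q r i) (hj : j + k ≤ m) :
    OccursAt p q j := by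
  refine ⟨hj, fun a b => ?_⟩
  rw [hpr.2, hqr.2]
  simp only [Nat.add_assoc]

theorem OccursAt.eq_of_length_eq {n : ℕ} {p q : Perm' n} {i : ℕ} (h : OccursAt p q i) :
    p = q := by
  obtain rfl : i = 0 := by have := h.1; omega
  exact perm_eq_of_lt_iff fun a b => by simpa using h.2 a b

theorem pLE.fst_le {x y : PermS} (h : pLE x y) : x.1 ≤ y.1 :=
  let ⟨_, hi⟩ := h
  (Nat.le_add_left _ _).trans hi.1

theorem pLT.fst_lt {x y : PermS} (h : pLT x y) : x.1 < y.1 := by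
  obtain ⟨n, p⟩ := x
  obtain ⟨n', q⟩ := y
  refine lt_of_le_of_ne h.1.fst_le fun hn => h.2 ?_
  obtain rfl : n = n' := hn
  obtain ⟨i, hi⟩ := h.1
  rw [show p = q from hi.eq_of_length_eq]

theorem SimpleGraph.not_connected_of_adj_iff {V : Type*} {G : SimpleGraph V} (P : V → Prop)
    (hadj : ∀ x y, G.Adj x y → (P x ↔ P y)) {u v : V} (hu : P u) (hv : ¬ P v) :
    ¬ G.Connected := fun hG => by
  have huv := (SimpleGraph.reachable_iff_reflTransGen u v).1 (hG.preconnected u v)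
  induction huv with
  | refl => exact hv hu
  | tail _ hxy ih => exact ih fun hx => hv ((hadj _ _ hxy).1 hx)

section Straddles

variable {p q : PermS}

theorem Straddles.occursAt_unique (hs : Straddles p q) {π : PermS} (hπq : pLT π q) {j j' : ℕ}
    (hj : OccursAt p.2 π.2 j) (hj' : OccursAt p.2 π.2 j') : j = j' := by
  obtain ⟨i, hi⟩ := hπq.1
  have := hs.2.2.2 _ (hj.trans hi)
  have := hs.2.2.2 _ (hj'.trans hi)
  have := hi.1; have := hj.1; have := hj'.1; have := hπq.fst_lt
  omega

theorem Straddles.occursAt_zero_iff (hs : Straddles p q) {π ρ : PermS}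
    (hπ : π ∈ openInterval p q) (hρ : ρ ∈ openInterval p q) (hπρ : pLE π ρ) :
    OccursAt p.2 π.2 0 ↔ OccursAt p.2 ρ.2 0 := by
  obtain ⟨t, ht⟩ := hπρ
  constructor
  · intro h0
    obtain ⟨i, hi⟩ := hρ.2.1
    have := hs.2.2.2 _ ((h0.trans ht).trans hi)
    have := (ht.trans hi).1
    have := hπ.1.fst_lt
    obtain rfl : t = 0 := by omega
    simpa using h0.trans ht
  · intro h0
    obtain ⟨j, hj⟩ := hπ.1.1
    have := hs.occursAt_unique hρ.2 (hj.trans ht) h0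
    obtain rfl : j = 0 := by omega
    exact hj

theorem Straddles.intervalDisconnected (hs : Straddles p q) (hr : p.1 + 2 ≤ q.1) :
    IntervalDisconnected p q := by
  have mem {π : Perm' (p.1 + 1)} {i j : ℕ} (hj : OccursAt p.2 π j) (hi : OccursAt π q.2 i) :
      ⟨_, π⟩ ∈ openInterval p q :=
    ⟨⟨⟨j, hj⟩, ne_of_apply_ne Sigma.fst (by dsimp only; omega)⟩,
      ⟨⟨i, hi⟩, ne_of_apply_ne Sigma.fst (by dsimp only; omega)⟩⟩
  have hu := occursAt_window q.2 (i := 0) (m := p.1 + 1) (by omega)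
  have hv := occursAt_window q.2 (i := q.1 - p.1 - 1) (m := p.1 + 1) (by omega)
  have hpu : OccursAt p.2 (window q.2 0 (p.1 + 1)) 0 :=
    hs.2.1.of_add_of_occursAt (i := 0) hu (by omega)
  have hpv : OccursAt p.2 (window q.2 (q.1 - p.1 - 1) (p.1 + 1)) 1 :=
    (show q.1 - p.1 = q.1 - p.1 - 1 + 1 by omega) ▸ hs.2.2.1 |>.of_add_of_occursAt hv (by omega)
  refine SimpleGraph.not_connected_of_adj_iff (fun π => OccursAt p.2 π.1.2 0)
    (fun π ρ hπρ => ?_) (u := ⟨_, mem hpu hu⟩) (v := ⟨_, mem hpv hv⟩) hpu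
    fun h0 => one_ne_zero (hs.occursAt_unique (mem hpv hv).2 hpv h0)
  rcases ((SimpleGraph.fromRel_adj _ _ _).1 hπρ).2 with h | h
  · exact hs.occursAt_zero_iff π.2 ρ.2 h.1.1
  · exact (hs.occursAt_zero_iff ρ.2 π.2 h.1.1).symm

end Straddles

/-- The skew sum `π ⊖ ρ`: `π` followed by `ρ`, with all values of `π` above those of `ρ`. -/
def skewSum {k l : ℕ} (π : Perm' k) (ρ : Perm' l) : Perm' (k + l) :=
  finSumFinEquiv.symm.trans <| (π.sumCongr ρ).trans <|
    (Equiv.sumComm _ _).trans <| finSumFinEquiv.trans (finCongr (add_comm l k))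

section SumOccurrences

variable {k l : ℕ} (π : Perm' k) (ρ : Perm' l)

theorem skewSum_apply_castAdd (x : Fin k) : (skewSum π ρ (Fin.castAdd l x) : ℕ) = l + π x := by
  simp [skewSum, add_comm]

theorem skewSum_apply_natAdd (y : Fin l) : (skewSum π ρ (Fin.natAdd k y) : ℕ) = ρ y := by
  simp [skewSum]

theorem dsum_apply_natAdd (y : Fin l) : (dsum π ρ (Fin.natAdd k y) : ℕ) = k + ρ y := by
  simp [dsum, Equiv.permCongr_apply]

theorem occursAt_skewSum_left : OccursAt π (skewSum π ρ) 0 := by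
  refine ⟨by omega, fun a b => ?_⟩
  have h (c : Fin k) : (⟨0 + c, by omega⟩ : Fin (k + l)) = Fin.castAdd l c :=
    Fin.ext (zero_add _)
  simp only [h, Fin.lt_def, skewSum_apply_castAdd, Nat.add_lt_add_iff_left]

theorem occursAt_skewSum_right : OccursAt ρ (skewSum π ρ) k :=
  ⟨le_rfl, fun a b => show _ ↔ skewSum π ρ (Fin.natAdd k a) < skewSum π ρ (Fin.natAdd k b) by
    simp only [Fin.lt_def, skewSum_apply_natAdd]⟩

theorem occursAt_dsum_right : OccursAt ρ (dsum π ρ) k :=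
  ⟨le_rfl, fun a b => show _ ↔ dsum π ρ (Fin.natAdd k a) < dsum π ρ (Fin.natAdd k b) by
    simp only [Fin.lt_def, dsum_apply_natAdd, Nat.add_lt_add_iff_left]⟩

end SumOccurrences

theorem straddles_skewSum_self {k : ℕ} {a : Perm' k} (hk : 0 < k) (ha : ∀ y, a ⟨0, hk⟩ ≤ a y) :
    Straddles ⟨k, a⟩ ⟨k + k, skewSum a a⟩ := by
  refine ⟨⟨⟨0, occursAt_skewSum_left a a⟩, ne_of_apply_ne Sigma.fst (by dsimp only; omega)⟩,
    occursAt_skewSum_left a a, by simpa using occursAt_skewSum_right a a, fun i hi => ?_⟩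
  dsimp only at hi ⊢
  have hik : i ≤ k := by have := hi.1; omega
  by_contra hne
  -- the leftmost entry of the second copy is the global minimum of `a ⊖ a`
  refine (ha ⟨k - i, by omega⟩).not_gt ((hi.2 _ _).2 ?_)
  have e1 : (⟨i + (k - i), by omega⟩ : Fin (k + k)) = Fin.natAdd k ⟨0, hk⟩ :=
    Fin.ext (show i + (k - i) = k + 0 by omega)
  have e2 : (⟨i + 0, by omega⟩ : Fin (k + k)) = Fin.castAdd k ⟨i, by omega⟩ := rfl
  rw [Fin.lt_def]
  simp only [e1, e2, skewSum_apply_natAdd, skewSum_apply_castAdd]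
  omega

theorem hasNontrivDisconSub_of_pLE_skewSum {m : ℕ} (hm : 1 ≤ m) (σ : Perm' m) {τ : PermS}
    (h : pLE ⟨_, skewSum (dsum (1 : Perm' 2) σ) (dsum (1 : Perm' 2) σ)⟩ τ) :
    HasNontrivDisconSub ⟨m, σ⟩ τ := by
  set a := dsum (1 : Perm' 2) σ
  have ha (y : Fin (2 + m)) : a ⟨0, by omega⟩ ≤ a y := by
    rw [show (⟨0, by omega⟩ : Fin (2 + m)) = Fin.castAdd m 0 from rfl]
    simp [a, dsum, Equiv.permCongr_apply, Fin.le_def]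
  exact ⟨⟨_, a⟩, ⟨_, skewSum a a⟩, ⟨2, occursAt_dsum_right _ σ⟩,
    ⟨0, occursAt_skewSum_left a a⟩, h, by dsimp only; omega,
    (straddles_skewSum_self (by omega) ha).intervalDisconnected (by dsimp only; omega)⟩

theorem card_filter_eq_eq_of_mul_equivariant {α G : Type*} [Fintype α] [Group G]
    (act : G → α ≃ α) (f : α → G) (hf : ∀ g x, f (act g x) = f x * g) (v w : G) :
    #{x | f x = v} = #{x | f x = w} :=
  card_equiv (act (v⁻¹ * w)) fun x => by
    simp only [mem_filter, mem_univ, true_and, hf, ← mul_assoc, mul_eq_right, mul_inv_eq_one]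

theorem card_filter_mem_mul_card_of_mul_equivariant {α G : Type*} [Fintype α] [Group G]
    [Fintype G] (act : G → α ≃ α) (f : α → G) (hf : ∀ g x, f (act g x) = f x * g)
    (s : Finset G) :
    #{x | f x ∈ s} * Fintype.card G = #s * Fintype.card α := by
  set c := #{x | f x = 1}
  have hfiber (v : G) : #{x | f x = v} = c := card_filter_eq_eq_of_mul_equivariant act f hf v 1
  have hα : Fintype.card α = Fintype.card G * c := by
    rw [← card_univ, card_eq_sum_card_fiberwise (f := f) (t := univ) fun _ _ => mem_univ _]
    simp [hfiber]
  have hs : #{x | f x ∈ s} = #s * c := by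
    rw [card_eq_sum_card_fiberwise (f := f) (s := univ.filter fun x => f x ∈ s) (t := s)
      fun x hx => (mem_filter.1 hx).2, ← smul_eq_mul, ← sum_const]
    refine sum_congr rfl fun v hv => ?_
    rw [filter_filter, ← hfiber v]
    congr 1
    exact filter_congr fun x _ => ⟨And.right, fun h => ⟨h ▸ hv, h⟩⟩
  rw [hα, hs, mul_assoc, mul_comm c]

section Blocks

variable {k L n : ℕ}

def blockEmbedding (hkL : k * L ≤ n) : Fin k × Fin L ↪ Fin n :=
  finProdFinEquiv.toEmbedding.trans (Fin.castLEEmb hkL)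

theorem blockEmbedding_apply_val (hkL : k * L ≤ n) (j : Fin k) (t : Fin L) :
    (blockEmbedding hkL (j, t) : ℕ) = t + L * j :=
  rfl

theorem mul_add_le_of_mul_le (hkL : k * L ≤ n) (j : Fin k) : L * j + L ≤ n :=
  calc L * j + L = L * (j + 1) := by ring
    _ ≤ L * k := Nat.mul_le_mul_left _ j.isLt
    _ ≤ n := by rwa [mul_comm]

def blockPerm (hkL : k * L ≤ n) (ρ : Fin k → Perm' L) : Perm' n :=
  Equiv.Perm.viaEmbedding (Equiv.prodShear (Equiv.refl _) ρ) (blockEmbedding hkL)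

theorem blockPerm_apply (hkL : k * L ≤ n) (ρ : Fin k → Perm' L) (j : Fin k) (t : Fin L) :
    blockPerm hkL ρ (blockEmbedding hkL (j, t)) = blockEmbedding hkL (j, ρ j t) :=
  Equiv.Perm.viaEmbedding_apply _ _ _

def blockPatterns (k L : ℕ) (τ : Perm' n) (j : Fin k) : Perm' L :=
  window τ (L * j) L

theorem blockPatterns_mul_blockPerm (hkL : k * L ≤ n) (τ : Perm' n) (ρ : Fin k → Perm' L) :
    blockPatterns k L (τ * blockPerm hkL ρ) = blockPatterns k L τ * ρ := by
  funext j
  refine window_mul_of_apply _ _ _ (mul_add_le_of_mul_le hkL j) fun t => ?_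
  have hemb (t : Fin L) : blockEmbedding hkL (j, t) = ⟨L * j + t, by
      have := mul_add_le_of_mul_le hkL j; omega⟩ :=
    Fin.ext ((blockEmbedding_apply_val hkL j t).trans (add_comm _ _))
  rw [← hemb, ← hemb, blockPerm_apply]

theorem card_filter_blockPatterns_ne_mul (hkL : k * L ≤ n) (β : Perm' L) :
    #{τ : Perm' n | ∀ j, blockPatterns k L τ j ≠ β} * L.factorial ^ k =
      (L.factorial - 1) ^ k * n.factorial := by
  have h := card_filter_mem_mul_card_of_mul_equivariant
    (fun ρ => Equiv.mulRight (blockPerm hkL ρ)) (blockPatterns k L)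
    (fun ρ τ => blockPatterns_mul_blockPerm hkL τ ρ) (Fintype.piFinset fun _ => univ.erase β)
  simpa only [Fintype.mem_piFinset, mem_erase, mem_univ, and_true, Fintype.card_piFinset_const,
    card_erase_of_mem (mem_univ β), card_univ, Fintype.card_pi, Fintype.card_perm,
    Fintype.card_fin, prod_const] using h

end Blocks

theorem card_filter_div_factorial_le_one {n : ℕ} (P : Perm' n → Prop) :
    (#{τ | P τ} : ℝ) / n.factorial ≤ 1 :=
  div_le_one_of_le₀
    (by exact_mod_cast (card_filter_le _ _).trans_eq (by simp [Fintype.card_perm]))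
    (by positivity)

theorem one_sub_pow_le_card_filter_pLE_div {L : ℕ} (β : Perm' L) (n : ℕ) :
    1 - (1 - 1 / (L.factorial : ℝ)) ^ (n / L) ≤
      (#{τ : Perm' n | pLE ⟨L, β⟩ ⟨n, τ⟩} : ℝ) / n.factorial := by
  set k := n / L
  have hkL : k * L ≤ n := Nat.div_mul_le_self n L
  have hLf : (L.factorial : ℝ) ≠ 0 := by positivity
  have hnf : (0 : ℝ) < n.factorial := by positivity
  have havoid : #{τ : Perm' n | ¬ pLE ⟨L, β⟩ ⟨n, τ⟩} ≤
      #{τ : Perm' n | ∀ j, blockPatterns k L τ j ≠ β} :=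
    card_le_card <| monotone_filter_right _ fun τ _ hτ j hj =>
      hτ ⟨_, occursAt_iff_window_eq.2 ⟨mul_add_le_of_mul_le hkL j, hj⟩⟩
  have hblocks : (#{τ : Perm' n | ∀ j, blockPatterns k L τ j ≠ β} : ℝ) =
      (1 - 1 / (L.factorial : ℝ)) ^ k * n.factorial := by
    have h := congrArg (Nat.cast (R := ℝ)) (card_filter_blockPatterns_ne_mul hkL β)
    push_cast [Nat.one_le_iff_ne_zero.2 (Nat.factorial_ne_zero L)] at h
    rw [one_sub_div hLf, div_pow, div_mul_eq_mul_div, eq_div_iff (pow_ne_zero _ hLf), h]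
  have hsplit := card_filter_add_card_filter_not (s := (univ : Finset (Perm' n)))
    fun τ => pLE ⟨L, β⟩ ⟨n, τ⟩
  rw [card_univ, Fintype.card_perm, Fintype.card_fin] at hsplit
  rw [le_div_iff₀ hnf, sub_mul, one_mul, ← hblocks, ← hsplit]
  push_cast
  linarith [(Nat.cast_le (α := ℝ)).2 havoid]

theorem tendsto_card_filter_pLE_div_factorial {L : ℕ} (hL : 0 < L) (β : Perm' L) :
    Filter.Tendsto (fun n : ℕ => (#{τ : Perm' n | pLE ⟨L, β⟩ ⟨n, τ⟩} : ℝ) / n.factorial)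
      Filter.atTop (nhds 1) := by
  have h1 : 1 / (L.factorial : ℝ) ≤ 1 :=
    div_le_one_of_le₀ (Nat.one_le_cast.2 (Nat.factorial_pos L)) (by positivity)
  have hpow : Filter.Tendsto (fun n : ℕ => (1 - 1 / (L.factorial : ℝ)) ^ (n / L))
      Filter.atTop (nhds 0) :=
    (tendsto_pow_atTop_nhds_zero_of_lt_one (sub_nonneg.2 h1) (sub_lt_self _ (by positivity))).comp
      (Nat.tendsto_div_const_atTop hL.ne')
  exact tendsto_of_tendsto_of_tendsto_of_le_of_le (by simpa using hpow.const_sub 1)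
    tendsto_const_nhds (one_sub_pow_le_card_filter_pLE_div β)
    fun _ => card_filter_div_factorial_le_one _

/-- Theorem 3.5: for fixed `σ`, the proportion of permutations `τ` of
length `n` such that `[σ,τ]` contains a non-trivial disconnected subinterval tends to 1. -/
theorem stmt7 {m : ℕ} (hm : 1 ≤ m) (σ : Perm' m) :
    Filter.Tendsto
      (fun n : ℕ =>
        ((Finset.univ.filter fun τ : Perm' n =>
            HasNontrivDisconSub ⟨m, σ⟩ ⟨n, τ⟩).card : ℝ) / (Nat.factorial n : ℝ))
      Filter.atTop (nhds 1) := by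
  set a := dsum (1 : Perm' 2) σ
  refine tendsto_of_tendsto_of_tendsto_of_le_of_le
    (tendsto_card_filter_pLE_div_factorial (by omega) (skewSum a a)) tendsto_const_nhds
    (fun n => ?_) fun _ => card_filter_div_factorial_le_one _
  gcongr
  exact hasNontrivDisconSub_of_pLE_skewSum hm σ

end
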